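/- For σ_r = σ_c the case of a square matrix A ∈ ℝ^{n×n} with rows and columns permuted by the same permutation σ, the total ℓ^p von Neumann stress equals Σ_{(i,k)∈A_N} (ω^R_{ik} + ω^C_{ik}), where A_N is the set of consecutive pairs under σ, ω^R_{ik} = 2Σ_j|a_{ij}−a_{kj}|^p and ω^C_{ik} = 2Σ_j|a_{ji}−a_{jk}|^p. Hence coordinated seriation is equivalent to a single minimum-weight Hamiltonian path with summed weights. -/

import Mathlib

open Finset

/-- Total ℓᵖ stress of a matrix `B` under the von Neumann neighborhood. -/
noncomputable def stressVN (n m : ℕ) (p : ℝ) (B : Fin n → Fin m → ℝ) : ℝ :=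
  ∑ k : Fin n, ∑ l : Fin m, ∑ k' : Fin n, ∑ l' : Fin m,
    if ((k' : ℤ) - (k : ℤ)) ^ 2 + ((l' : ℤ) - (l : ℤ)) ^ 2 = 1 then
      |B k l - B k' l'| ^ p
    else 0

/-- Weight of the Hamiltonian path induced by permutation `σ` for edge weights `ω`. -/
noncomputable def pathWeight (n : ℕ) (ω : Fin n → Fin n → ℝ)
    (σ : Equiv.Perm (Fin n)) : ℝ :=
  ∑ i : Fin n, ∑ k : Fin n, if (σ k : ℕ) = (σ i : ℕ) + 1 then ω i k else 0

/-!
A von Neumann neighbour of a cell differs from it in exactly one coordinate, by one. Hence the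
stress splits into the row gaps `∑ⱼ |b_kj - b_k'j|ᵖ` summed over adjacent row positions plus the
column gaps summed over adjacent column positions. Each such sum counts every adjacent pair in both
orders, so for symmetric gaps it is twice the sum over consecutive pairs. Pulling the positions
back through `σ` turns consecutive positions into the pairs `σ k = σ i + 1`, and since rows and
columns are permuted by the same `σ`, both sums run over the same Hamiltonian path.
-/

theorem Int.sq_add_sq_eq_one_iff {x y : ℤ} :
    x ^ 2 + y ^ 2 = 1 ↔ x = 0 ∧ y ^ 2 = 1 ∨ x ^ 2 = 1 ∧ y = 0 := by
  refine ⟨fun h => ?_, by rintro (⟨rfl, h⟩ | ⟨h, rfl⟩) <;> simp [h]⟩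
  rcases eq_or_ne x 0 with rfl | hx
  · simpa using h
  · have hx1 : 0 < x ^ 2 := by positivity
    have hy : y ^ 2 = 0 := by nlinarith [sq_nonneg y]
    exact .inr ⟨by linarith, pow_eq_zero_iff two_ne_zero |>.mp hy⟩

theorem Int.natCast_sub_natCast_sq_eq_one_iff {a b : ℕ} :
    ((b : ℤ) - a) ^ 2 = 1 ↔ b = a + 1 ∨ a = b + 1 := by
  rw [sq_eq_one_iff]; omega

noncomputable def rowGap {ι κ : Type*} [Fintype κ] (p : ℝ) (B : ι → κ → ℝ) (i k : ι) : ℝ :=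
  ∑ j, |B i j - B k j| ^ p

def sumAdjacent {n : ℕ} (g : Fin n → Fin n → ℝ) : ℝ :=
  ∑ a : Fin n, ∑ b : Fin n, if ((b : ℤ) - a) ^ 2 = 1 then g a b else 0

theorem vonNeumann_adj_iff {n m : ℕ} {k k' : Fin n} {l l' : Fin m} :
    ((k' : ℤ) - k) ^ 2 + ((l' : ℤ) - l) ^ 2 = 1 ↔
      k' = k ∧ ((l' : ℤ) - l) ^ 2 = 1 ∨ ((k' : ℤ) - k) ^ 2 = 1 ∧ l' = l := by
  simp only [Int.sq_add_sq_eq_one_iff, sub_eq_zero, Int.natCast_inj, Fin.val_inj]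

theorem ite_vonNeumann_adj {n m : ℕ} (k k' : Fin n) (l l' : Fin m) (x : ℝ) :
    (if ((k' : ℤ) - k) ^ 2 + ((l' : ℤ) - l) ^ 2 = 1 then x else 0) =
      (if k' = k then if ((l' : ℤ) - l) ^ 2 = 1 then x else 0 else 0) +
        (if l' = l then if ((k' : ℤ) - k) ^ 2 = 1 then x else 0 else 0) := by
  rw [if_congr vonNeumann_adj_iff rfl rfl]
  split_ifs <;> simp_all

theorem stressVN_eq_sumAdjacent_add {n m : ℕ} (p : ℝ) (B : Fin n → Fin m → ℝ) :
    stressVN n m p B = sumAdjacent (rowGap p B) + sumAdjacent (rowGap p (Function.swap B)) := by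
  simp only [stressVN, ite_vonNeumann_adj, sum_add_distrib, sum_ite_irrel, sum_const_zero, sum_ite_eq',
    mem_univ, if_true]
  rw [add_comm]
  congr 1
  · simp only [sumAdjacent, rowGap, ite_sum_zero]
    refine sum_congr rfl fun _ _ => ?_
    exact sum_comm
  · simp only [sumAdjacent, rowGap, ite_sum_zero, Function.swap]
    rw [sum_comm]
    refine sum_congr rfl fun _ _ => ?_
    exact sum_comm

theorem rowGap_comm {ι κ : Type*} [Fintype κ] (p : ℝ) (B : ι → κ → ℝ) (i k : ι) :
    rowGap p B i k = rowGap p B k i :=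
  sum_congr rfl fun _ _ => by rw [abs_sub_comm]

theorem rowGap_comp {ι ι' κ κ' : Type*} [Fintype κ] [Fintype κ'] (p : ℝ) (B : ι → κ → ℝ)
    (f : ι' → ι) (e : κ' ≃ κ) (i k : ι') :
    rowGap p (fun a b => B (f a) (e b)) i k = rowGap p B (f i) (f k) :=
  e.sum_comp fun j => |B (f i) j - B (f k) j| ^ p

theorem pathWeight_add {n : ℕ} (ω₁ ω₂ : Fin n → Fin n → ℝ) (σ : Equiv.Perm (Fin n)) :
    pathWeight n (fun a b => ω₁ a b + ω₂ a b) σ = pathWeight n ω₁ σ + pathWeight n ω₂ σ := by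
  simp only [pathWeight, ← sum_add_distrib, ite_add_zero]

theorem pathWeight_comp_symm {n : ℕ} (ω : Fin n → Fin n → ℝ) (σ τ : Equiv.Perm (Fin n)) :
    pathWeight n (fun a b => ω (σ.symm a) (σ.symm b)) τ = pathWeight n ω (τ * σ) := by
  rw [pathWeight, ← Equiv.sum_comp σ]
  refine sum_congr rfl fun i _ => ?_
  rw [← Equiv.sum_comp σ]
  simp only [Equiv.symm_apply_apply, Equiv.Perm.mul_apply]
  rfl

theorem sumAdjacent_eq_pathWeight_one {n : ℕ} {g : Fin n → Fin n → ℝ}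
    (hg : ∀ a b, g a b = g b a) :
    sumAdjacent g = pathWeight n (fun a b => 2 * g a b) 1 := by
  show _ = ∑ a : Fin n, ∑ b : Fin n, if (b : ℕ) = a + 1 then 2 * g a b else 0
  have hsplit (a b : Fin n) : (if ((b : ℤ) - a) ^ 2 = 1 then g a b else 0) =
      (if (b : ℕ) = a + 1 then g a b else 0) + (if (a : ℕ) = b + 1 then g b a else 0) := by
    rw [if_congr Int.natCast_sub_natCast_sq_eq_one_iff rfl rfl]
    split_ifs <;> first | omega | simp [hg a b]
  simp only [sumAdjacent, hsplit, sum_add_distrib]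
  rw [sum_comm (f := fun a b : Fin n => if (a : ℕ) = b + 1 then g b a else 0), ← sum_add_distrib]
  refine sum_congr rfl fun a _ => ?_
  rw [← sum_add_distrib]
  refine sum_congr rfl fun b _ => ?_
  rw [← two_mul, mul_ite, mul_zero]

theorem stressVN_perm_eq_pathWeight {n : ℕ} (p : ℝ) (A : Fin n → Fin n → ℝ)
    (σ : Equiv.Perm (Fin n)) :
    stressVN n n p (fun k l => A (σ.symm k) (σ.symm l)) =
      pathWeight n (fun i k => 2 * rowGap p A i k + 2 * rowGap p (Function.swap A) i k) σ := by
  have hrow : rowGap p (fun k l => A (σ.symm k) (σ.symm l)) =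
      fun a b => rowGap p A (σ.symm a) (σ.symm b) :=
    funext₂ (rowGap_comp p A σ.symm σ.symm)
  have hcol : rowGap p (Function.swap fun k l => A (σ.symm k) (σ.symm l)) =
      fun a b => rowGap p (Function.swap A) (σ.symm a) (σ.symm b) :=
    funext₂ (rowGap_comp p (Function.swap A) σ.symm σ.symm)
  rw [stressVN_eq_sumAdjacent_add, hrow, hcol,
    sumAdjacent_eq_pathWeight_one fun a b => rowGap_comm p A _ _,
    sumAdjacent_eq_pathWeight_one fun a b => rowGap_comm p (Function.swap A) _ _,
    pathWeight_comp_symm (fun a b => 2 * rowGap p A a b),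
    pathWeight_comp_symm (fun a b => 2 * rowGap p (Function.swap A) a b), one_mul, pathWeight_add]

theorem stressVN_coordinated_eq_hamiltonian_general (n : ℕ) (p : ℝ)
    (A : Fin n → Fin n → ℝ) :
    (∀ σ : Equiv.Perm (Fin n),
      stressVN n n p (fun k l => A (σ.symm k) (σ.symm l)) =
        ∑ i : Fin n, ∑ k : Fin n,
          if (σ k : ℕ) = (σ i : ℕ) + 1 then
            (2 * ∑ j : Fin n, |A i j - A k j| ^ p)
              + (2 * ∑ j : Fin n, |A j i - A j k| ^ p)
          else 0) ∧
    sInf {s : ℝ | ∃ σ : Equiv.Perm (Fin n),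
        s = stressVN n n p (fun k l => A (σ.symm k) (σ.symm l))} =
      sInf {w : ℝ | ∃ σ : Equiv.Perm (Fin n),
        w = pathWeight n (fun i k =>
          (2 * ∑ j : Fin n, |A i j - A k j| ^ p)
            + (2 * ∑ j : Fin n, |A j i - A j k| ^ p)) σ} :=
  ⟨stressVN_perm_eq_pathWeight p A, by simp_rw [stressVN_perm_eq_pathWeight]; rfl⟩

/-- For a square matrix with rows and columns permuted by the same permutation `σ`,
the total ℓᵖ von Neumann stress equals `Σ_{(i,k)∈A_N} (ω^R_{ik} + ω^C_{ik})` over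
consecutive pairs; hence coordinated seriation is a single minimum-weight
Hamiltonian path problem with summed weights. -/
theorem stressVN_coordinated_eq_hamiltonian (n : ℕ) (hn : 1 ≤ n) (p : ℝ)
    (hp : 1 ≤ p) (A : Fin n → Fin n → ℝ) :
    (∀ σ : Equiv.Perm (Fin n),
      stressVN n n p (fun k l => A (σ.symm k) (σ.symm l)) =
        ∑ i : Fin n, ∑ k : Fin n,
          if (σ k : ℕ) = (σ i : ℕ) + 1 then
            (2 * ∑ j : Fin n, |A i j - A k j| ^ p)
              + (2 * ∑ j : Fin n, |A j i - A j k| ^ p)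
          else 0) ∧
    sInf {s : ℝ | ∃ σ : Equiv.Perm (Fin n),
        s = stressVN n n p (fun k l => A (σ.symm k) (σ.symm l))} =
      sInf {w : ℝ | ∃ σ : Equiv.Perm (Fin n),
        w = pathWeight n (fun i k =>
          (2 * ∑ j : Fin n, |A i j - A k j| ^ p)
            + (2 * ∑ j : Fin n, |A j i - A j k| ^ p)) σ} :=
  stressVN_coordinated_eq_hamiltonian_general n p A
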